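/- Let y_r, y_f ∈ ℝ, v_r, v_f ≥ 0, a ≥ 0, ρ ≥ 0 and 0 < b_min ≤ b_max. Let F be the braking trajectory with data (y_f, v_f, b_max) and let R be the accelerate-then-brake trajectory with data (y_r, v_r, a, ρ, b_min). Then for every t ≥ 0, F(t) − R(t) ≥ min( y_f − y_r , (y_f + v_f²/(2·b_max)) − (y_r + v_r·ρ + (a/2)·ρ² + (v_r + a·ρ)²/(2·b_min)) ). That is, the gap between the two worst-case trajectories attains its minimum either initially or after both vehicles have stopped. -/

import Mathlib

/-- The braking trajectory: position at time `t` of a vehicle starting at `x₀`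
with speed `v`, braking at constant rate `b` until stopped (at time `v/b`). -/
noncomputable def brk (x₀ v b : ℝ) (t : ℝ) : ℝ :=
  if t ≤ v / b then x₀ + v * t - (b / 2) * t ^ 2 else x₀ + v ^ 2 / (2 * b)

/-- The accelerate-then-brake trajectory: position at time `t` of a vehicle
starting at `x₀` with speed `v`, accelerating at rate `a` for time `τ`,
then braking at rate `b` until stopped, remaining stopped afterwards. -/
noncomputable def atb (x₀ v a τ b : ℝ) (t : ℝ) : ℝ :=
  if t ≤ τ then x₀ + v * t + (a / 2) * t ^ 2
  else if t ≤ τ + (v + a * τ) / b then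
    (x₀ + v * τ + (a / 2) * τ ^ 2) + (v + a * τ) * (t - τ) - (b / 2) * (t - τ) ^ 2
  else (x₀ + v * τ + (a / 2) * τ ^ 2) + (v + a * τ) ^ 2 / (2 * b)

/-! Comparing the speeds `u` of the front and `w` of the rear vehicle at time `t`:
if `u ≤ w`, the front's remaining braking distance `u²/(2 b_max)` is at most the rear's,
which is at least `w²/(2 b_min)`, so the gap at `t` is at least the final gap.
If `u > w`, run time backwards from `t`: the front speeds up at rate `b_max` and has covered
`t u + b_max t²/2`, while the rear speeds up at rate at most `b_min` and has covered at most
`t w + b_min t²/2`, so the gap at `t` is at least the initial gap. -/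

noncomputable def brkVel (v b t : ℝ) : ℝ :=
  if t ≤ v / b then v - b * t else 0

noncomputable def atbVel (v a τ b t : ℝ) : ℝ :=
  if t ≤ τ then v + a * t
  else if t ≤ τ + (v + a * τ) / b then v + a * τ - b * (t - τ)
  else 0

section Braking

variable {x v b t : ℝ}

theorem brkVel_nonneg (hb : 0 < b) : 0 ≤ brkVel v b t := by
  unfold brkVel
  split_ifs with h
  · rw [le_div_iff₀ hb] at h
    linarith
  · rfl

theorem brk_add_brkVel_sq (hb : b ≠ 0) :
    brk x v b t + brkVel v b t ^ 2 / (2 * b) = x + v ^ 2 / (2 * b) := by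
  unfold brk brkVel
  split_ifs
  · field_simp
    ring
  · simp

theorem brk_eq_of_brkVel_pos (h : 0 < brkVel v b t) :
    brk x v b t = x + t * brkVel v b t + b / 2 * t ^ 2 := by
  unfold brk brkVel at *
  split_ifs at * with ht
  · ring
  · exact (lt_irrefl 0 h).elim

end Braking

section AccelerateThenBrake

variable {x v a τ b t : ℝ}

theorem atbVel_nonneg (hv : 0 ≤ v) (ha : 0 ≤ a) (hb : 0 < b) (ht : 0 ≤ t) :
    0 ≤ atbVel v a τ b t := by
  unfold atbVel
  split_ifs with hacc hbrake
  · positivity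
  · rw [← sub_le_iff_le_add', le_div_iff₀ hb] at hbrake
    linarith
  · rfl

theorem atb_add_atbVel_sq_le (hv : 0 ≤ v) (ha : 0 ≤ a) (hb : 0 < b) (ht : 0 ≤ t) :
    atb x v a τ b t + atbVel v a τ b t ^ 2 / (2 * b)
      ≤ x + v * τ + a / 2 * τ ^ 2 + (v + a * τ) ^ 2 / (2 * b) := by
  unfold atb atbVel
  split_ifs with hacc
  · have hw : v + a * t ≤ v + a * τ := by nlinarith
    have hsq : (v + a * t) ^ 2 / (2 * b) ≤ (v + a * τ) ^ 2 / (2 * b) := by gcongr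
    nlinarith [mul_nonneg (sub_nonneg.2 hacc) (add_nonneg hv (mul_nonneg ha ht))]
  · refine le_of_eq ?_
    field_simp
    ring
  · simp

theorem atb_le_add_atbVel_mul (hv : 0 ≤ v) (ha : 0 ≤ a) (hτ : 0 ≤ τ) (hb : 0 < b) :
    atb x v a τ b t ≤ x + t * atbVel v a τ b t + b / 2 * t ^ 2 := by
  unfold atb atbVel
  split_ifs with hacc hbrake
  · nlinarith [sq_nonneg t]
  · nlinarith [sq_nonneg τ]
  · set T := τ + (v + a * τ) / b
    have hT : 0 ≤ T := by positivity
    have hTt : T ^ 2 ≤ t ^ 2 := pow_le_pow_left₀ hT (not_le.1 hbrake).le 2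
    have hstop : x + v * τ + a / 2 * τ ^ 2 + (v + a * τ) ^ 2 / (2 * b)
        = x + b / 2 * T ^ 2 - (a + b) / 2 * τ ^ 2 := by
      simp only [T]
      field_simp
      ring
    nlinarith [mul_le_mul_of_nonneg_left hTt hb.le, mul_nonneg (add_nonneg ha hb.le) (sq_nonneg τ)]

end AccelerateThenBrake

theorem gap_min_at_start_or_stopped_general (y_r y_f v_r v_f a ρ b_min b_max : ℝ)
    (hvr : 0 ≤ v_r) (ha : 0 ≤ a) (hρ : 0 ≤ ρ)
    (hbmin : 0 < b_min) (hb : b_min ≤ b_max) :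
    ∀ t : ℝ, 0 ≤ t →
      min (y_f - y_r)
          ((y_f + v_f ^ 2 / (2 * b_max)) -
            (y_r + v_r * ρ + (a / 2) * ρ ^ 2 + (v_r + a * ρ) ^ 2 / (2 * b_min)))
        ≤ brk y_f v_f b_max t - atb y_r v_r a ρ b_min t := by
  intro t ht
  have hbmax : 0 < b_max := hbmin.trans_le hb
  have hw : 0 ≤ atbVel v_r a ρ b_min t := atbVel_nonneg hvr ha hbmin ht
  rcases le_or_gt (brkVel v_f b_max t) (atbVel v_r a ρ b_min t) with huw | hwu
  · have hstop :
        brkVel v_f b_max t ^ 2 / (2 * b_max) ≤ atbVel v_r a ρ b_min t ^ 2 / (2 * b_min) :=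
      div_le_div₀ (sq_nonneg _) (pow_le_pow_left₀ (brkVel_nonneg hbmax) huw 2)
        (by positivity) (by linarith)
    refine (min_le_right _ _).trans ?_
    linarith [brk_add_brkVel_sq (x := y_f) (v := v_f) (t := t) hbmax.ne',
      atb_add_atbVel_sq_le (x := y_r) (τ := ρ) hvr ha hbmin ht]
  · refine (min_le_left _ _).trans ?_
    rw [brk_eq_of_brkVel_pos (hw.trans_lt hwu)]
    nlinarith [atb_le_add_atbVel_mul (x := y_r) (t := t) hvr ha hρ hbmin,
      mul_le_mul_of_nonneg_left hwu.le ht, mul_le_mul_of_nonneg_right hb (sq_nonneg t)]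

theorem gap_min_at_start_or_stopped (y_r y_f v_r v_f a ρ b_min b_max : ℝ)
    (hvr : 0 ≤ v_r) (hvf : 0 ≤ v_f) (ha : 0 ≤ a) (hρ : 0 ≤ ρ)
    (hbmin : 0 < b_min) (hb : b_min ≤ b_max) :
    ∀ t : ℝ, 0 ≤ t →
      min (y_f - y_r)
          ((y_f + v_f ^ 2 / (2 * b_max)) -
            (y_r + v_r * ρ + (a / 2) * ρ ^ 2 + (v_r + a * ρ) ^ 2 / (2 * b_min)))
        ≤ brk y_f v_f b_max t - atb y_r v_r a ρ b_min t :=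
  gap_min_at_start_or_stopped_general y_r y_f v_r v_f a ρ b_min b_max hvr ha hρ hbmin hb
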